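/- The supremum of the explicit velocity over the closed unit ball blows up at the blowup time: the function t ↦ sup_{|x| ≤ 1} |v̄(t,x)| tends to +∞ as t → (T*)⁻; in particular sup_{|x| ≤ 1} |v̄(t,x)| ≥ 2|a|/(T*−t) for every t ∈ [0,T*). -/

import Mathlib

/-- Partial derivative of `f : ℝ³ → ℝ` in the `j`-th coordinate direction at `x`. -/
noncomputable def pd (f : (Fin 3 → ℝ) → ℝ) (j : Fin 3) (x : Fin 3 → ℝ) : ℝ :=
  deriv (fun s => f (Function.update x j s)) (x j)

/-- Laplacian of `f : ℝ³ → ℝ` at `x`. -/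
noncomputable def lap (f : (Fin 3 → ℝ) → ℝ) (x : Fin 3 → ℝ) : ℝ :=
  ∑ j : Fin 3, pd (fun y => pd f j y) j x

/-- The explicit blowup velocity field `v̄`. -/
noncomputable def vbar (T a k : ℝ) (t : ℝ) (x : Fin 3 → ℝ) : Fin 3 → ℝ :=
  ![a * x 0 / (T - t) + k * x 1 * (T - t) ^ (2 * a),
    a * x 1 / (T - t) - k * x 0 * (T - t) ^ (2 * a),
    -2 * a * x 2 / (T - t)]

/-- The explicit blowup magnetic field `H̄`. -/
noncomputable def Hbar (T a ab k : ℝ) (t : ℝ) (x : Fin 3 → ℝ) : Fin 3 → ℝ :=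
  ![ab * x 0 + 2 * ab * k * x 1 * x 2 * (T - t) ^ (2 * a + 1) / (4 * a + 1),
    ab * x 1 - 2 * ab * k * x 0 * x 2 * (T - t) ^ (2 * a + 1) / (4 * a + 1),
    -2 * ab * x 2]

/-!
At `x = e₃` the field is `v̄(t, e₃) = (0, 0, -2a/(T-t))`, of norm `2|a|/(T-t)`; the supremum over
the compact unit ball of the continuous function `|v̄(t, ·)|` is finite and dominates this value.
-/

open Filter Topology

theorem tendsto_const_sub_nhdsLT (T : ℝ) : Tendsto (T - ·) (𝓝[<] T) (𝓝[>] 0) :=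
  tendsto_nhdsWithin_of_tendsto_nhds_of_eventually_within _
    (by simpa using ((continuous_sub_left T).tendsto T).mono_left nhdsWithin_le_nhds)
    (eventually_nhdsWithin_of_forall fun _ ht => sub_pos.2 (Set.mem_Iio.1 ht))

theorem tendsto_div_const_sub_nhdsLT_atTop (T : ℝ) {c : ℝ} (hc : 0 < c) :
    Tendsto (fun t => c / (T - t)) (𝓝[<] T) atTop := by
  simpa only [div_eq_mul_inv, Function.comp_def] using
    (tendsto_inv_nhdsGT_zero.comp (tendsto_const_sub_nhdsLT T)).const_mul_atTop hc

theorem isCompact_sum_sq_le_one :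
    IsCompact {x : Fin 3 → ℝ | x 0 ^ 2 + x 1 ^ 2 + x 2 ^ 2 ≤ 1} := by
  refine (isCompact_Icc (a := (-1 : Fin 3 → ℝ)) (b := 1)).of_isClosed_subset
    (isClosed_le (by fun_prop) continuous_const) fun x hx => ?_
  have hsq : ∀ i, x i ^ 2 ≤ 1 := by
    intro i
    have := Finset.single_le_sum (fun j _ => sq_nonneg (x j)) (Finset.mem_univ i)
    rw [Fin.sum_univ_three] at this
    exact this.trans hx
  exact ⟨fun i => (abs_le.1 ((sq_le_one_iff_abs_le_one _).1 (hsq i))).1,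
    fun i => (abs_le.1 ((sq_le_one_iff_abs_le_one _).1 (hsq i))).2⟩

noncomputable def vbarSupNorm (T a k t : ℝ) : ℝ :=
  sSup ((fun x : Fin 3 → ℝ =>
      Real.sqrt ((vbar T a k t x 0) ^ 2 + (vbar T a k t x 1) ^ 2 + (vbar T a k t x 2) ^ 2)) ''
    {x : Fin 3 → ℝ | (x 0) ^ 2 + (x 1) ^ 2 + (x 2) ^ 2 ≤ 1})

theorem vbar_apply_basis_two (T a k t : ℝ) :
    vbar T a k t ![0, 0, 1] = ![0, 0, -2 * a / (T - t)] := by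
  ext i; fin_cases i <;> simp [vbar]

theorem div_le_vbarSupNorm (T a k t : ℝ) (ht : t < T) :
    2 * |a| / (T - t) ≤ vbarSupNorm T a k t := by
  have hbdd := isCompact_sum_sq_le_one.bddAbove_image (f := fun x : Fin 3 → ℝ =>
      Real.sqrt ((vbar T a k t x 0) ^ 2 + (vbar T a k t x 1) ^ 2 + (vbar T a k t x 2) ^ 2))
    (by unfold vbar; simp only [Matrix.cons_val]; fun_prop)
  refine le_of_eq_of_le ?_ (le_csSup hbdd (Set.mem_image_of_mem _
    (show ![0, 0, 1] ∈ {x : Fin 3 → ℝ | x 0 ^ 2 + x 1 ^ 2 + x 2 ^ 2 ≤ 1} by simp)))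
  simp [vbar_apply_basis_two, Real.sqrt_sq_eq_abs, abs_div, abs_of_pos (sub_pos.2 ht)]

theorem vbar_sup_blowup_general (T a k : ℝ) (ha : a ≠ 0) :
    Filter.Tendsto
      (fun t : ℝ => sSup ((fun x : Fin 3 → ℝ =>
          Real.sqrt ((vbar T a k t x 0) ^ 2 + (vbar T a k t x 1) ^ 2
            + (vbar T a k t x 2) ^ 2)) ''
        {x : Fin 3 → ℝ | (x 0) ^ 2 + (x 1) ^ 2 + (x 2) ^ 2 ≤ 1}))
      (nhdsWithin T (Set.Iio T)) Filter.atTop ∧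
    ∀ t ∈ Set.Ico (0 : ℝ) T,
      2 * |a| / (T - t) ≤ sSup ((fun x : Fin 3 → ℝ =>
          Real.sqrt ((vbar T a k t x 0) ^ 2 + (vbar T a k t x 1) ^ 2
            + (vbar T a k t x 2) ^ 2)) ''
        {x : Fin 3 → ℝ | (x 0) ^ 2 + (x 1) ^ 2 + (x 2) ^ 2 ≤ 1}) :=
  ⟨tendsto_atTop_mono' _
      (eventually_nhdsWithin_of_forall fun t ht => div_le_vbarSupNorm T a k t ht)
      (tendsto_div_const_sub_nhdsLT_atTop T (by positivity)),
    fun t ht => div_le_vbarSupNorm T a k t ht.2⟩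

/-- the supremum of the Euclidean norm of the explicit velocity
over the closed unit ball blows up as `t → (T*)⁻`, and is bounded below by
`2|a|/(T−t)`. -/
theorem vbar_sup_blowup (T a k : ℝ) (hT : 0 < T) (hk : k ≠ 0) (ha : a ≠ 0) :
    Filter.Tendsto
      (fun t : ℝ => sSup ((fun x : Fin 3 → ℝ =>
          Real.sqrt ((vbar T a k t x 0) ^ 2 + (vbar T a k t x 1) ^ 2
            + (vbar T a k t x 2) ^ 2)) ''
        {x : Fin 3 → ℝ | (x 0) ^ 2 + (x 1) ^ 2 + (x 2) ^ 2 ≤ 1}))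
      (nhdsWithin T (Set.Iio T)) Filter.atTop ∧
    ∀ t ∈ Set.Ico (0 : ℝ) T,
      2 * |a| / (T - t) ≤ sSup ((fun x : Fin 3 → ℝ =>
          Real.sqrt ((vbar T a k t x 0) ^ 2 + (vbar T a k t x 1) ^ 2
            + (vbar T a k t x 2) ^ 2)) ''
        {x : Fin 3 → ℝ | (x 0) ^ 2 + (x 1) ^ 2 + (x 2) ^ 2 ≤ 1}) :=
  vbar_sup_blowup_general T a k ha
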